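/- Let r ∈ (0,1). There exists a constant C = C(r) > 0 such that for every f ∈ L¹(0,∞) ∩ L²(0,∞) with finite Gagliardo seminorm [f]_{r,(0,∞)}, one has ‖f‖_{L²(0,∞)} ≤ C ‖f‖_{L¹(0,∞)}^{2r/(1+2r)} [f]_{r,(0,∞)}^{1/(1+2r)}. -/

import Mathlib

open MeasureTheory ENNReal

/-- The squared Gagliardo seminorm `[f]_{s,Ω}²` for an open set `Ω ⊆ ℝ` (dimension `N = 1`). -/
noncomputable def gagliardoSq1 (s : ℝ) (Ω : Set ℝ) (f : ℝ → ℝ) : ℝ≥0∞ :=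
  ∫⁻ x in Ω, ∫⁻ y in Ω, ENNReal.ofReal ((f x - f y) ^ 2 / |x - y| ^ (1 + 2 * s))

/-!
For `x > 0` and `h > 0`, average the elementary bound
`f(x)² ≤ 2 |f(x)| |f(y)| + (f(x) - f(y))²` over `y ∈ (x, x + h)`, where `|x - y| ≤ h` gives
`(f(x) - f(y))² ≤ h^(1+2r) (f(x) - f(y))² / |x - y|^(1+2r)`. Integrating in `x` yields
`h ‖f‖₂² ≤ 2 ‖f‖₁² + h^(1+2r) [f]²` for every `h`, and the choice `h^(1+2r) = ‖f‖₁² / [f]²`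
balances the two terms.
-/

open Set Filter Topology

lemma sq_le_two_mul_abs_mul_abs_add_sq_sub (a b : ℝ) : a ^ 2 ≤ 2 * (|a| * |b|) + (a - b) ^ 2 := by
  nlinarith [abs_mul a b, le_abs_self (a * b), sq_nonneg b]

lemma le_rpow_mul_div_rpow {c d h p : ℝ} (hc : 0 ≤ c) (hp : 0 ≤ p) (hd : 0 < d) (hdh : d ≤ h) :
    c ≤ h ^ p * (c / d ^ p) := by
  rw [mul_div_assoc', le_div_iff₀ (Real.rpow_pos_of_pos hd p), mul_comm]
  exact mul_le_mul_of_nonneg_right (Real.rpow_le_rpow hd.le hdh hp) hc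

lemma eLpNorm_two_sq {α : Type*} [MeasurableSpace α] (μ : Measure α) (f : α → ℝ) :
    eLpNorm f 2 μ ^ 2 = ∫⁻ x, ‖f x‖ₑ ^ 2 ∂μ := by
  simpa using eLpNorm_nnreal_pow_eq_lintegral (μ := μ) (f := f) (p := 2) two_ne_zero

lemma enorm_sq_le_of_abs_sub_le {f : ℝ → ℝ} {x y h p : ℝ} (hp : 0 ≤ p) (hxy : x ≠ y)
    (hxyh : |x - y| ≤ h) :
    ‖f x‖ₑ ^ 2 ≤ 2 * ‖f x‖ₑ * ‖f y‖ₑ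
      + ENNReal.ofReal (h ^ p) * ENNReal.ofReal ((f x - f y) ^ 2 / |x - y| ^ p) := by
  have hh : 0 ≤ h ^ p := Real.rpow_nonneg ((abs_nonneg _).trans hxyh) p
  have hreal := (sq_le_two_mul_abs_mul_abs_add_sq_sub (f x) (f y)).trans <| add_le_add_right
    (le_rpow_mul_div_rpow (sq_nonneg (f x - f y)) hp (abs_sub_pos.2 hxy) hxyh) _
  rw [← ENNReal.ofReal_mul hh, Real.enorm_eq_ofReal_abs, Real.enorm_eq_ofReal_abs,
    ← ENNReal.ofReal_pow (abs_nonneg _), sq_abs, mul_assoc, ← ENNReal.ofReal_mul (abs_nonneg _),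
    ← ENNReal.ofReal_ofNat 2, ← ENNReal.ofReal_mul zero_le_two,
    ← ENNReal.ofReal_add (by positivity) (mul_nonneg hh (by positivity))]
  exact ENNReal.ofReal_le_ofReal hreal

lemma ofReal_mul_enorm_sq_le {f : ℝ → ℝ} {a x h p : ℝ}
    (hf : AEMeasurable f (volume.restrict (Ioi a))) (hp : 0 ≤ p) (hx : x ∈ Ioi a) :
    ENNReal.ofReal h * ‖f x‖ₑ ^ 2 ≤ 2 * ‖f x‖ₑ * (∫⁻ y in Ioi a, ‖f y‖ₑ)
      + ENNReal.ofReal (h ^ p) * ∫⁻ y in Ioi a, ENNReal.ofReal ((f x - f y) ^ 2 / |x - y| ^ p) := by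
  have hsub : Ioo x (x + h) ⊆ Ioi a := fun y hy => lt_trans hx hy.1
  have hfI : AEMeasurable f (volume.restrict (Ioo x (x + h))) :=
    hf.mono_measure (Measure.restrict_mono hsub le_rfl)
  calc ENNReal.ofReal h * ‖f x‖ₑ ^ 2 = ∫⁻ _ in Ioo x (x + h), ‖f x‖ₑ ^ 2 := by
        rw [setLIntegral_const, Real.volume_Ioo, add_sub_cancel_left, mul_comm]
    _ ≤ ∫⁻ y in Ioo x (x + h), (2 * ‖f x‖ₑ * ‖f y‖ₑ
          + ENNReal.ofReal (h ^ p) * ENNReal.ofReal ((f x - f y) ^ 2 / |x - y| ^ p)) := by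
        refine setLIntegral_mono_ae' measurableSet_Ioo (ae_of_all _ fun y hy => ?_)
        refine enorm_sq_le_of_abs_sub_le hp hy.1.ne ?_
        rw [abs_sub_comm, abs_of_pos (sub_pos.2 hy.1)]
        linarith [hy.2]
    _ = 2 * ‖f x‖ₑ * (∫⁻ y in Ioo x (x + h), ‖f y‖ₑ) + ENNReal.ofReal (h ^ p) *
          ∫⁻ y in Ioo x (x + h), ENNReal.ofReal ((f x - f y) ^ 2 / |x - y| ^ p) := by
        rw [lintegral_add_left' (hfI.enorm.const_mul _), lintegral_const_mul'' _ hfI.enorm,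
          lintegral_const_mul' _ _ ofReal_ne_top]
    _ ≤ _ := by gcongr

lemma ofReal_mul_eLpNorm_two_sq_le {f : ℝ → ℝ} {a s : ℝ} (h : ℝ)
    (hf : AEMeasurable f (volume.restrict (Ioi a))) (hs : 0 ≤ 1 + 2 * s) :
    ENNReal.ofReal h * eLpNorm f 2 (volume.restrict (Ioi a)) ^ 2 ≤
      2 * eLpNorm f 1 (volume.restrict (Ioi a)) ^ 2
        + ENNReal.ofReal (h ^ (1 + 2 * s)) * gagliardoSq1 s (Ioi a) f := by
  rw [eLpNorm_two_sq, eLpNorm_one_eq_lintegral_enorm, ← lintegral_const_mul' _ _ ofReal_ne_top,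
    gagliardoSq1, ← lintegral_const_mul' _ _ ofReal_ne_top, sq, ← mul_assoc,
    ← lintegral_const_mul'' 2 hf.enorm, ← lintegral_mul_const'' _ (hf.enorm.const_mul _),
    ← lintegral_add_left' ((hf.enorm.const_mul _).mul_const _)]
  exact setLIntegral_mono_ae' measurableSet_Ioi
    (ae_of_all _ fun x hx => ofReal_mul_enorm_sq_le hf hs hx)

lemma le_of_forall_mul_sq_le_add_rpow_mul {x a g s : ℝ} (hs : s ≠ 0) (ha : 0 < a) (hg : 0 < g)
    (hx : 0 ≤ x) (key : ∀ h > 0, h * x ^ 2 ≤ 2 * a ^ 2 + h ^ s * g) :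
    x ≤ √3 * a ^ (1 - 1 / s) * g ^ (1 / (2 * s)) := by
  set h := a ^ (2 / s) / g ^ (1 / s) with hdef
  have hpos : 0 < h := by positivity
  have h_balance : h ^ s * g = a ^ 2 := by
    rw [hdef, Real.div_rpow (by positivity) (by positivity), ← Real.rpow_mul ha.le,
      ← Real.rpow_mul hg.le, div_mul_cancel₀ _ hs, one_div_mul_cancel hs, Real.rpow_one,
      div_mul_cancel₀ _ hg.ne', Real.rpow_two]
  have hxsq : x ^ 2 ≤ 3 * a ^ 2 / h := by
    rw [le_div_iff₀ hpos]
    linarith [key h hpos]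
  have hrhs : 3 * a ^ 2 / h = (√3 * a ^ (1 - 1 / s) * g ^ (1 / (2 * s))) ^ 2 := by
    rw [mul_pow, mul_pow, Real.sq_sqrt zero_le_three, ← Real.rpow_mul_natCast ha.le,
      ← Real.rpow_mul_natCast hg.le, show (1 - 1 / s) * (2 : ℕ) = 2 - 2 / s by push_cast; ring,
      show 1 / (2 * s) * (2 : ℕ) = 1 / s by push_cast; field_simp, Real.rpow_sub ha, Real.rpow_two,
      hdef]
    field_simp
  rw [hrhs] at hxsq
  exact (pow_le_pow_iff_left₀ hx (by positivity) two_ne_zero).1 hxsq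

lemma eq_zero_of_forall_ofReal_mul_le {x c : ℝ≥0∞} (hc : c ≠ ⊤)
    (h : ∀ t : ℝ, ENNReal.ofReal t * x ≤ c) : x = 0 := by
  by_contra hx
  have hlim : Tendsto (fun t => ENNReal.ofReal t * x) atTop (𝓝 (⊤ * x)) :=
    ENNReal.Tendsto.mul_const ENNReal.tendsto_ofReal_atTop (Or.inl top_ne_zero)
  rw [top_mul hx] at hlim
  exact hc (top_le_iff.1 (le_of_tendsto' hlim h))

lemma le_of_forall_ofReal_mul_sq_le {X A G : ℝ≥0∞} {s : ℝ} (hs : 0 < s) (hX : X ≠ ⊤)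
    (hA : A ≠ ⊤) (hG : G ≠ ⊤) (hA0 : A ≠ 0)
    (key : ∀ h : ℝ, ENNReal.ofReal h * X ^ 2 ≤ 2 * A ^ 2 + ENNReal.ofReal (h ^ s) * G) :
    X ≤ ENNReal.ofReal √3 * A ^ (1 - 1 / s) * G ^ (1 / (2 * s)) := by
  rcases eq_or_ne G 0 with rfl | hG0
  · have hX0 : X ^ 2 = 0 := eq_zero_of_forall_ofReal_mul_le (c := 2 * A ^ 2) (by finiteness)
      fun h => by simpa only [mul_zero, add_zero] using key h
    simp [pow_eq_zero_iff two_ne_zero |>.1 hX0]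
  obtain ⟨x, hx, rfl⟩ : ∃ x, 0 ≤ x ∧ X = ENNReal.ofReal x :=
    ⟨X.toReal, toReal_nonneg, (ofReal_toReal hX).symm⟩
  obtain ⟨a, ha, rfl⟩ : ∃ a, 0 < a ∧ A = ENNReal.ofReal a :=
    ⟨A.toReal, toReal_pos hA0 hA, (ofReal_toReal hA).symm⟩
  obtain ⟨g, hg, rfl⟩ : ∃ g, 0 < g ∧ G = ENNReal.ofReal g :=
    ⟨G.toReal, toReal_pos hG0 hG, (ofReal_toReal hG).symm⟩
  have key_real : ∀ h > 0, h * x ^ 2 ≤ 2 * a ^ 2 + h ^ s * g := fun h hh => by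
    have := key h
    rwa [← ofReal_pow hx, ← ofReal_pow ha.le, ← ofReal_mul hh.le, ← ofReal_ofNat 2,
      ← ofReal_mul zero_le_two, ← ofReal_mul (by positivity), ← ofReal_add (by positivity)
      (by positivity), ofReal_le_ofReal_iff (by positivity)] at this
  rw [ofReal_rpow_of_pos ha, ofReal_rpow_of_pos hg, ← ofReal_mul (by positivity),
    ← ofReal_mul (by positivity)]
  exact ofReal_le_ofReal (le_of_forall_mul_sq_le_add_rpow_mul hs.ne' ha hg hx key_real)

/-- Fractional Nash inequality on the half line `(0, ∞)`. -/
theorem nash_half_line (r : ℝ) (hr : r ∈ Set.Ioo (0 : ℝ) 1) :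
    ∃ C : ℝ, 0 < C ∧ ∀ f : ℝ → ℝ,
      MemLp f 1 (volume.restrict (Set.Ioi (0 : ℝ))) →
      MemLp f 2 (volume.restrict (Set.Ioi (0 : ℝ))) →
      gagliardoSq1 r (Set.Ioi 0) f ≠ ⊤ →
      eLpNorm f 2 (volume.restrict (Set.Ioi (0 : ℝ))) ≤
        ENNReal.ofReal C * eLpNorm f 1 (volume.restrict (Set.Ioi (0 : ℝ))) ^ (2 * r / (1 + 2 * r)) *
          gagliardoSq1 r (Set.Ioi 0) f ^ (1 / (2 * (1 + 2 * r))) := by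
  obtain ⟨hr0, -⟩ := hr
  refine ⟨√3, by positivity, fun f hf1 hf2 hG => ?_⟩
  rcases eq_or_ne (eLpNorm f 1 (volume.restrict (Ioi 0))) 0 with hA0 | hA0
  · rw [eLpNorm_eq_zero_iff hf1.1 one_ne_zero] at hA0
    simp [eLpNorm_congr_ae hA0]
  have hnash := le_of_forall_ofReal_mul_sq_le (by linarith) hf2.eLpNorm_ne_top
    hf1.eLpNorm_ne_top hG hA0
    fun h => ofReal_mul_eLpNorm_two_sq_le h hf1.1.aemeasurable (by linarith)
  rwa [show 1 - 1 / (1 + 2 * r) = 2 * r / (1 + 2 * r) by field_simp; ring] at hnash
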